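/- Let x ∈ ℝ^n with l_i < x_i < u_i, λˡ_i > 0, λᵘ_i > 0, and let H be an n×n real matrix. Suppose for a given index i we have the scalar identity Δx_i^S − Δx_i^N = (H_{ii} + λˡ_i/(x_i−l_i) + λᵘ_i/(u_i−x_i))⁻¹ · Σ_{j≠i} H_{ij} Δx_j^N, and suppose x_i − l_i ≤ Cμ (active at lower bound), λˡ_i ≥ c > 0, λᵘ_i ≥ 0, H bounded with max_{ij}|H_{ij}| ≤ B, and ‖Δx^N‖ ≤ Kμ. Then |Δx_i^S − Δx_i^N| ≤ (C/c) · B √n · K · μ². -/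

import Mathlib

noncomputable def enorm2 {n : ℕ} (v : Fin n → ℝ) : ℝ :=
  ‖(WithLp.equiv 2 (Fin n → ℝ)).symm v‖

lemma l1_le_sqrt_l2 {n : ℕ} (v : Fin n → ℝ) :
    ∑ j, |v j| ≤ Real.sqrt n * enorm2 v := by
  have hnorm : enorm2 v = Real.sqrt (∑ j, (v j) ^ 2) := by
    rw [enorm2, EuclideanSpace.norm_eq]
    congr 1
    exact Finset.sum_congr rfl fun j _ => by rw [Real.norm_eq_abs, sq_abs]; rfl
  have hcs := Finset.sum_mul_sq_le_sq_mul_sq Finset.univ (fun _ : Fin n => (1:ℝ))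
      (fun j => |v j|)
  simp only [one_mul, one_pow, Finset.sum_const, Finset.card_univ, Fintype.card_fin,
    nsmul_eq_mul, mul_one, sq_abs] at hcs
  have h1 : ∑ j, |v j| = Real.sqrt ((∑ j, |v j|) ^ 2) := by
    rw [Real.sqrt_sq (Finset.sum_nonneg fun j _ => abs_nonneg _)]
  rw [h1, hnorm, ← Real.sqrt_mul (Nat.cast_nonneg n)]
  exact Real.sqrt_le_sqrt hcs

/-- Quantitative O(μ²) error bound for the Schur-based approximate direction at an index
active at its lower bound, in the two-sided bound case. -/
theorem stmt17 {n : ℕ} (H : Matrix (Fin n) (Fin n) ℝ)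
    (x l u laml lamu ΔxS ΔxN : Fin n → ℝ) (i : Fin n) (C c B K μ : ℝ)
    (hb : ∀ j, l j < x j ∧ x j < u j)
    (hll : ∀ j, 0 < laml j) (hlu : ∀ j, 0 < lamu j)
    (hid : ΔxS i - ΔxN i
        = (H i i + laml i / (x i - l i) + lamu i / (u i - x i))⁻¹
          * ∑ j ∈ Finset.univ.erase i, H i j * ΔxN j)
    (hCμ : x i - l i ≤ C * μ) (hcl : c ≤ laml i)
    (hHii : 0 ≤ H i i)
    (hB : ∀ j k, |H j k| ≤ B)
    (hKN : enorm2 ΔxN ≤ K * μ)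
    (hCpos : 0 < C) (hcpos : 0 < c) (hKpos : 0 < K) (hμ : 0 < μ) :
    |ΔxS i - ΔxN i| ≤ (C / c) * B * Real.sqrt n * K * μ ^ 2 := by
  have hxl : 0 < x i - l i := sub_pos.mpr (hb i).1
  have hux : 0 < u i - x i := sub_pos.mpr (hb i).2
  have hBnn : 0 ≤ B := (abs_nonneg _).trans (hB i i)
  set D := H i i + laml i / (x i - l i) + lamu i / (u i - x i) with hD
  have hDlb : c / (C * μ) ≤ D := by
    have h1 : c / (C * μ) ≤ laml i / (x i - l i) :=
      div_le_div₀ (hcpos.le.trans hcl) hcl hxl hCμ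
    have h2 : 0 ≤ lamu i / (u i - x i) := le_of_lt (div_pos (hlu i) hux)
    nlinarith [h1]
  have hDpos : 0 < D := lt_of_lt_of_le (by positivity) hDlb
  have hDinv : D⁻¹ ≤ C * μ / c := by
    have := inv_anti₀ (by positivity) hDlb
    rwa [inv_div] at this
  have hS : |∑ j ∈ Finset.univ.erase i, H i j * ΔxN j| ≤ B * Real.sqrt n * (K * μ) := by
    calc |∑ j ∈ Finset.univ.erase i, H i j * ΔxN j|
        ≤ ∑ j ∈ Finset.univ.erase i, |H i j * ΔxN j| := Finset.abs_sum_le_sum_abs _ _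
      _ ≤ ∑ j ∈ Finset.univ.erase i, B * |ΔxN j| := by
          refine Finset.sum_le_sum fun j _ => ?_
          rw [abs_mul]
          exact mul_le_mul_of_nonneg_right (hB i j) (abs_nonneg _)
      _ ≤ ∑ j, B * |ΔxN j| :=
          Finset.sum_le_sum_of_subset_of_nonneg (Finset.erase_subset _ _)
            (fun j _ _ => by positivity)
      _ = B * ∑ j, |ΔxN j| := by rw [Finset.mul_sum]
      _ ≤ B * (Real.sqrt n * enorm2 ΔxN) :=
          mul_le_mul_of_nonneg_left (l1_le_sqrt_l2 ΔxN) hBnn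
      _ ≤ B * (Real.sqrt n * (K * μ)) := by
          have := mul_le_mul_of_nonneg_left hKN (Real.sqrt_nonneg (n:ℝ))
          exact mul_le_mul_of_nonneg_left this hBnn
      _ = B * Real.sqrt n * (K * μ) := by ring
  rw [hid, abs_mul, abs_of_pos (inv_pos.mpr hDpos)]
  calc D⁻¹ * |∑ j ∈ Finset.univ.erase i, H i j * ΔxN j|
      ≤ (C * μ / c) * (B * Real.sqrt n * (K * μ)) :=
        mul_le_mul hDinv hS (abs_nonneg _) (by positivity)
    _ = (C / c) * B * Real.sqrt n * K * μ ^ 2 := by ring
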